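/- Fix 0 < p < ∞. Let μ be a finite positive Borel measure on 𝕋, singular with respect to Lebesgue measure, supported in a closed set E of measure zero with ∫_𝕋 |log dist(ξ,E)|^p dm(ξ) < ∞. Then the singular inner function S_μ(z) = exp(-∫_𝕋 (ξ+z)/(ξ-z) dμ(ξ)) has log|S_μ'| ∈ L^p(𝕋), where |S_μ'(ξ)| denotes the angular derivative. -/

import Mathlib

open Complex MeasureTheory Metric Set Filter
open scoped ENNReal

/-- The hyperbolic derivative of `f` at `z`. -/
noncomputable def hypDeriv (f : ℂ → ℂ) (z : ℂ) : ℝ :=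
  (1 - ‖z‖ ^ 2) * ‖deriv f z‖ / (1 - ‖f z‖ ^ 2)

/-- The point `e^{iθ}` of the unit circle. -/
noncomputable def circlePoint (θ : ℝ) : ℂ := Complex.exp (θ * Complex.I)

/-- Normalized Lebesgue measure on the unit circle, via the parametrization `θ ↦ e^{iθ}`,
`θ ∈ (0, 2π]`. -/
noncomputable def mT : Measure ℝ :=
  (ENNReal.ofReal (2 * Real.pi))⁻¹ • (volume.restrict (Ioc (0:ℝ) (2 * Real.pi)))

/-- `f` is an inner function: a holomorphic self-map of the unit disc whose radial limits have
modulus one almost everywhere on the circle. -/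
def IsInner (f : ℂ → ℂ) : Prop :=
  DifferentiableOn ℂ f (ball (0:ℂ) 1) ∧ (∀ z ∈ ball (0:ℂ) 1, f z ∈ ball (0:ℂ) 1) ∧
    ∀ᵐ θ ∂mT, Tendsto (fun r : ℝ => ‖f ((r:ℂ) * circlePoint θ)‖)
      (nhdsWithin 1 (Iio 1)) (nhds 1)

/-- `f` has (finite) angular derivative of modulus `L` at the boundary point `ξ`. -/
def HasAngularDeriv (f : ℂ → ℂ) (ξ : ℂ) (L : ℝ) : Prop :=
  Tendsto (fun r : ℝ => (1 - ‖f ((r:ℂ) * ξ)‖) / (1 - r))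
    (nhdsWithin 1 (Iio 1)) (nhds L)

/-- The accumulated Möbius distortion `A(f)(ξ) = ∫₀¹ (1 - D_h f(rξ)) ⬝ 2/(1-r²) dr`. -/
noncomputable def accumDistortion (f : ℂ → ℂ) (ξ : ℂ) : ℝ≥0∞ :=
  ∫⁻ r in Ioo (0:ℝ) 1, ENNReal.ofReal ((1 - hypDeriv f ((r:ℂ) * ξ)) * (2 / (1 - r ^ 2)))

/-- The singular inner function associated to a positive measure `μ` on the unit circle. -/
noncomputable def singularInner (μ : Measure ℂ) (z : ℂ) : ℂ :=
  Complex.exp (-∫ η, (η + z) / (η - z) ∂μ)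

lemma re_quot (η w : ℂ) (hη : ‖η‖ = 1) :
    ((η + w) / (η - w)).re = (1 - ‖w‖ ^ 2) / ‖η - w‖ ^ 2 := by
  have hη2 : η.re ^ 2 + η.im ^ 2 = 1 := by
    have := Complex.sq_norm η
    rw [hη] at this
    simpa [Complex.normSq_apply, sq] using this.symm
  rw [Complex.div_re, ← add_div]
  simp only [Complex.sq_norm, Complex.normSq_apply, Complex.add_re, Complex.add_im,
    Complex.sub_re, Complex.sub_im]
  congr 1
  linear_combination hη2

lemma measurable_invsq (w : ℂ) : Measurable (fun η => ((‖η - w‖) ^ 2)⁻¹) :=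
  (((continuous_norm.measurable.comp (measurable_id.sub_const w)).pow_const 2).inv)

lemma integrable_invsq (μ : Measure ℂ) [IsFiniteMeasure μ] (w : ℂ) (c : ℝ) (hc : 0 < c)
    (h1 : ∀ᵐ η ∂μ, c ≤ ‖η - w‖) :
    Integrable (fun η => ((‖η - w‖) ^ 2)⁻¹) μ := by
  refine (integrable_const ((c ^ 2)⁻¹)).mono' (measurable_invsq w).aestronglyMeasurable ?_
  filter_upwards [h1] with η hη
  rw [Real.norm_eq_abs, _root_.abs_of_nonneg (by positivity)]
  exact inv_anti₀ (by positivity) (by nlinarith [hc.le.trans hη])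

lemma integrable_quot (μ : Measure ℂ) [IsFiniteMeasure μ] (w : ℂ) (c : ℝ) (hc : 0 < c)
    (h1 : ∀ᵐ η ∂μ, ‖η‖ = 1 ∧ c ≤ ‖η - w‖) :
    Integrable (fun η => (η + w) / (η - w)) μ := by
  refine (integrable_const ((1 + ‖w‖) / c)).mono' ?_ ?_
  · exact (((measurable_id.add_const w)).div ((measurable_id.sub_const w))).aestronglyMeasurable
  · filter_upwards [h1] with η ⟨hη1, hη2⟩
    rw [norm_div]
    refine div_le_div₀ (by positivity) ?_ hc hη2
    calc ‖η + w‖ ≤ ‖η‖ + ‖w‖ := norm_add_le _ _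
    _ = 1 + ‖w‖ := by rw [hη1]

lemma abs_singularInner (μ : Measure ℂ) [IsFiniteMeasure μ] (w : ℂ) (c : ℝ) (hc : 0 < c)
    (h1 : ∀ᵐ η ∂μ, ‖η‖ = 1 ∧ c ≤ ‖η - w‖) :
    ‖singularInner μ w‖ =
      Real.exp (-((1 - ‖w‖ ^ 2) * ∫ η, ((‖η - w‖) ^ 2)⁻¹ ∂μ)) := by
  have hint : Integrable (fun η => (η + w) / (η - w)) μ := integrable_quot μ w c hc h1
  have hre := integral_re hint
  rw [RCLike.re_eq_complex_re] at hre
  rw [singularInner, Complex.norm_exp, Complex.neg_re, ← hre]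
  congr 2
  rw [← integral_const_mul]
  refine integral_congr_ae ?_
  filter_upwards [h1] with η ⟨hη1, hη2⟩
  rw [re_quot η w hη1, div_eq_mul_inv]
lemma tendsto_one_sub_exp_neg :
    Tendsto (fun x : ℝ => (1 - Real.exp (-x)) / x) (nhdsWithin 0 {x | x ≠ 0}) (nhds 1) := by
  have hderiv : HasDerivAt (fun x : ℝ => 1 - Real.exp (-x)) 1 0 := by
    have h := (Real.hasDerivAt_exp (-(0:ℝ))).comp 0 (hasDerivAt_neg (0:ℝ))
    have h2 := h.const_sub 1
    simpa using h2
  have := hasDerivAt_iff_tendsto_slope.mp hderiv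
  refine this.congr fun x => ?_
  simp [slope_def_field]

lemma angular_deriv_aux (μ : Measure ℂ) [IsFiniteMeasure μ]
    (E : Set ℂ) (hclosed : IsClosed E) (hsphere : E ⊆ Metric.sphere (0:ℂ) 1)
    (hsupp : μ Eᶜ = 0) (ξ : ℂ) (hξ : ‖ξ‖ = 1) (hξE : ξ ∉ E) :
    HasAngularDeriv (singularInner μ) ξ
      (2 * ∫ η, ((‖η - ξ‖) ^ 2)⁻¹ ∂μ) := by
  rcases eq_or_ne μ 0 with rfl | hμ0
  · simp only [HasAngularDeriv, singularInner, integral_zero_measure, neg_zero,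
      Complex.exp_zero, map_one, norm_one, sub_self, zero_div, mul_zero]
    exact tendsto_const_nhds
  have hE : E.Nonempty := by
    rcases E.eq_empty_or_nonempty with rfl | h
    · exact absurd (Measure.measure_univ_eq_zero.mp (by simpa using hsupp)) hμ0
    · exact h
  set d := infDist ξ E with hdd
  have hd : 0 < d := (hclosed.notMem_iff_infDist_pos hE).mp hξE
  have haeE : ∀ᵐ η ∂μ, η ∈ E := by
    rw [ae_iff]
    exact hsupp
  have hμU : 0 < (μ Set.univ).toReal :=
    ENNReal.toReal_pos (fun h => hμ0 (Measure.measure_univ_eq_zero.mp h)) (measure_ne_top μ _)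
  set S : Set ℝ := Ioo (max 0 (1 - d/2)) 1 with hSdef
  have hS : S ∈ nhdsWithin (1:ℝ) (Iio 1) :=
    Ioo_mem_nhdsLT (max_lt one_pos (by linarith))
  -- basic facts for r ∈ S
  have hr_facts : ∀ r ∈ S, 0 < r ∧ r < 1 ∧ 1 - d/2 < r := by
    intro r hr
    obtain ⟨hr1, hr2⟩ := hr
    exact ⟨lt_of_le_of_lt (le_max_left _ _) hr1, hr2,
      lt_of_le_of_lt (le_max_right _ _) hr1⟩
  have key : ∀ r ∈ S, ∀ᵐ η ∂μ, ‖η‖ = 1 ∧ d/2 ≤ ‖η - (r:ℂ)*ξ‖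
      ∧ ‖η - (r:ℂ)*ξ‖ ≤ 2 := by
    intro r hr
    obtain ⟨hr0, hr1, hrd⟩ := hr_facts r hr
    filter_upwards [haeE] with η hη
    have hη1 : ‖η‖ = 1 := by
      have := hsphere hη
      rw [mem_sphere_zero_iff_norm] at this
      simpa using this
    have hdist : d ≤ ‖η - ξ‖ := by
      have h := infDist_le_dist_of_mem (x := ξ) hη
      rw [Complex.dist_eq] at h
      rw [← norm_sub_rev ξ η]
      exact h
    have hrξ : ‖(r:ℂ)*ξ - ξ‖ = 1 - r := by
      have : (r:ℂ)*ξ - ξ = (((r - 1 : ℝ)):ℂ)*ξ := by push_cast; ring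
      rw [this, norm_mul, Complex.norm_real, Real.norm_eq_abs, hξ, mul_one, abs_of_nonpos (by linarith)]
      ring
    refine ⟨hη1, ?_, ?_⟩
    · have htri : ‖η - ξ‖ - ‖(r:ℂ)*ξ - ξ‖ ≤ ‖η - (r:ℂ)*ξ‖ := by
        have := norm_sub_norm_le (η - ξ) ((r:ℂ)*ξ - ξ)
        simpa [sub_sub_sub_cancel_right] using this
      rw [hrξ] at htri
      linarith
    · calc ‖η - (r:ℂ)*ξ‖ ≤ ‖η‖ + ‖(r:ℂ)*ξ‖ := by
            simpa using norm_sub_le η ((r:ℂ)*ξ)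
      _ ≤ 2 := by
            rw [hη1, norm_mul, Complex.norm_real, Real.norm_eq_abs, hξ, mul_one, _root_.abs_of_nonneg hr0.le]
            linarith
  set I : ℝ → ℝ := fun r => ∫ η, ((‖η - (r:ℂ)*ξ‖) ^ 2)⁻¹ ∂μ with hIdef
  set I1 : ℝ := ∫ η, ((‖η - ξ‖) ^ 2)⁻¹ ∂μ with hI1def
  have hint : ∀ r ∈ S, Integrable (fun η => ((‖η - (r:ℂ)*ξ‖) ^ 2)⁻¹) μ := by
    intro r hr
    refine integrable_invsq μ _ (d/2) (by linarith) ?_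
    filter_upwards [key r hr] with η hη using hη.2.1
  have hIlb : ∀ r ∈ S, (μ Set.univ).toReal * (4 : ℝ)⁻¹ ≤ I r := by
    intro r hr
    have h4 : ∫ η, (4:ℝ)⁻¹ ∂μ ≤ I r := by
      refine integral_mono_ae (integrable_const _) (hint r hr) ?_
      filter_upwards [key r hr] with η hη
      have h2 := hη.2.2
      have h0 : 0 < ‖η - (r:ℂ)*ξ‖ := lt_of_lt_of_le (by linarith) hη.2.1
      exact inv_anti₀ (pow_pos h0 2) (by nlinarith)
    rw [integral_const] at h4
    simpa [measureReal_def] using h4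
  have hIlim : Tendsto I (nhdsWithin 1 (Iio 1)) (nhds I1) := by
    refine tendsto_integral_filter_of_dominated_convergence
      (fun _ => ((d/2) ^ 2)⁻¹) ?_ ?_ (integrable_const _) ?_
    · exact Eventually.of_forall fun r => (measurable_invsq _).aestronglyMeasurable
    · filter_upwards [hS] with r hr
      filter_upwards [key r hr] with η hη
      rw [Real.norm_eq_abs, _root_.abs_of_nonneg (by positivity)]
      exact inv_anti₀ (pow_pos (by linarith) 2) (by nlinarith [hη.2.1, hd])
    · filter_upwards [haeE] with η hη
      have hdist : d ≤ ‖η - ξ‖ := by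
        have h := infDist_le_dist_of_mem (x := ξ) hη
        rw [Complex.dist_eq] at h
        rw [← norm_sub_rev ξ η]
        exact h
      have hcont : ContinuousAt (fun r : ℝ => ((‖η - (r:ℂ)*ξ‖) ^ 2)⁻¹) 1 := by
        refine ContinuousAt.inv₀ ?_ ?_
        · exact ((continuous_norm.comp
            (continuous_const.sub (Complex.continuous_ofReal.mul continuous_const))).pow 2).continuousAt
        · simp only [Complex.ofReal_one, one_mul]
          exact pow_ne_zero 2 (ne_of_gt (lt_of_lt_of_le hd hdist))
      have := hcont.tendsto.mono_left (nhdsWithin_le_nhds : nhdsWithin (1:ℝ) (Iio 1) ≤ nhds 1)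
      simpa using this
  -- assemble the limit
  have hglim : Tendsto (fun r : ℝ => (1 - r^2) * I r) (nhdsWithin 1 (Iio 1)) (nhds 0) := by
    have h1 : Tendsto (fun r : ℝ => 1 - r^2) (nhdsWithin 1 (Iio 1)) (nhds 0) := by
      have h2 : Tendsto (fun r : ℝ => 1 - r^2) (nhds 1) (nhds (1 - 1^2)) :=
        (continuous_const.sub (continuous_pow 2)).tendsto 1
      have h3 := h2.mono_left (nhdsWithin_le_nhds : nhdsWithin (1:ℝ) (Iio 1) ≤ nhds 1)
      simpa using h3
    simpa using h1.mul hIlim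
  have hgne : ∀ᶠ r in nhdsWithin (1:ℝ) (Iio 1), (1 - r^2) * I r ≠ 0 := by
    filter_upwards [hS] with r hr
    obtain ⟨hr0, hr1, _⟩ := hr_facts r hr
    have hlb := hIlb r hr
    have h12 : 0 < 1 - r^2 := by nlinarith
    exact ne_of_gt (mul_pos h12 (lt_of_lt_of_le (by positivity) hlb))
  have hcomp : Tendsto (fun r : ℝ => (1 - Real.exp (-((1 - r^2) * I r))) / ((1 - r^2) * I r))
      (nhdsWithin 1 (Iio 1)) (nhds 1) :=
    tendsto_one_sub_exp_neg.comp (tendsto_nhdsWithin_iff.mpr ⟨hglim, hgne⟩)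
  have hsec : Tendsto (fun r : ℝ => (1 + r) * I r) (nhdsWithin 1 (Iio 1)) (nhds ((1+1) * I1)) := by
    have h1 : Tendsto (fun r : ℝ => 1 + r) (nhdsWithin 1 (Iio 1)) (nhds (1+1)) :=
      ((continuous_const.add continuous_id).tendsto 1).mono_left
        (nhdsWithin_le_nhds : nhdsWithin (1:ℝ) (Iio 1) ≤ nhds 1)
    exact h1.mul hIlim
  have hmain := hcomp.mul hsec
  rw [one_mul] at hmain
  simp only [HasAngularDeriv]
  have h2I : (2:ℝ) * I1 = (1+1) * I1 := by ring
  rw [h2I]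
  refine Tendsto.congr' ?_ hmain
  filter_upwards [hS] with r hr
  obtain ⟨hr0, hr1, hrd2⟩ := hr_facts r hr
  have hkey : ∀ᵐ η ∂μ, ‖η‖ = 1 ∧ d/2 ≤ ‖η - (r:ℂ)*ξ‖ :=
    (key r hr).mono fun η hη => ⟨hη.1, hη.2.1⟩
  have habs := abs_singularInner μ ((r:ℂ)*ξ) (d/2) (by linarith) hkey
  have habsr : ‖(r:ℂ)*ξ‖ = r := by
    rw [norm_mul, Complex.norm_real, Real.norm_eq_abs, hξ, mul_one, _root_.abs_of_nonneg hr0.le]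
  rw [habs, habsr]
  have hlb := hIlb r hr
  simp only [hIdef] at hlb ⊢
  set J : ℝ := ∫ η, ((‖η - (r:ℂ)*ξ‖) ^ 2)⁻¹ ∂μ with hJdef
  have hJpos : 0 < J := lt_of_lt_of_le (by positivity) hlb
  have h12 : (0:ℝ) < 1 - r^2 := by nlinarith
  have h1r : (1:ℝ) - r ≠ 0 := by linarith
  field_simp
  ring

instance : IsFiniteMeasure mT := by
  constructor
  rw [mT]
  simp only [Measure.smul_apply, Measure.restrict_apply MeasurableSet.univ, Set.univ_inter,
    smul_eq_mul, Real.volume_Ioc]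
  exact ENNReal.mul_lt_top (ENNReal.inv_lt_top.mpr (by positivity)) ENNReal.ofReal_lt_top

lemma continuous_circlePoint : Continuous circlePoint :=
  Complex.continuous_exp.comp (Complex.continuous_ofReal.mul continuous_const)

lemma measurable_circlePoint : Measurable circlePoint :=
  continuous_circlePoint.measurable

lemma abs_circlePoint (θ : ℝ) : ‖circlePoint θ‖ = 1 := by
  rw [circlePoint, Complex.norm_exp]
  norm_num [Complex.mul_re, Complex.I_re, Complex.I_im]

/-- If a finite positive Borel measure `μ` on the circle, singular with respect to Lebesgue
measure, is supported in a closed set `E` of measure zero with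
`∫ |log dist(⬝,E)|^p dm < ∞` (a `𝒞(p)`-Beurling–Carleson set), then the singular inner function
`S_μ` has finite `L^p` entropy: its angular derivative is finite a.e. and
`log|S_μ'| ∈ L^p(𝕋)`. -/
theorem singular_inner_entropy_of_beurling_carleson
    (p : ℝ) (hp : 0 < p) (μ : Measure ℂ) [IsFiniteMeasure μ]
    (E : Set ℂ) (hclosed : IsClosed E) (hsphere : E ⊆ Metric.sphere (0:ℂ) 1)
    (hsupp : μ Eᶜ = 0)
    (hzero : mT {θ : ℝ | circlePoint θ ∈ E} = 0)
    (hBC : (∫⁻ θ, ENNReal.ofReal (|Real.log (Metric.infDist (circlePoint θ) E)| ^ p) ∂mT) < ⊤) :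
    ∃ F : ℝ → ℝ,
      (∀ᵐ θ ∂mT, HasAngularDeriv (singularInner μ) (circlePoint θ) (F θ)) ∧
      MemLp (fun θ => Real.log (F θ)) (ENNReal.ofReal p) mT := by
  refine ⟨fun θ => 2 * ∫ η, ((‖η - circlePoint θ‖) ^ 2)⁻¹ ∂μ, ?_, ?_⟩
  all_goals
    have hae : ∀ᵐ θ ∂mT, circlePoint θ ∉ E := by
      rw [ae_iff]
      simpa using hzero
  · filter_upwards [hae] with θ hθ
    exact angular_deriv_aux μ E hclosed hsphere hsupp _ (abs_circlePoint θ) hθ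
  -- MemLp part
  have haeE : ∀ᵐ η ∂μ, η ∈ E := by
    rw [ae_iff]
    exact hsupp
  have hFm : Measurable fun θ : ℝ => 2 * ∫ η, ((‖η - circlePoint θ‖) ^ 2)⁻¹ ∂μ := by
    refine measurable_const.mul ?_
    have hm : StronglyMeasurable (fun q : ℝ × ℂ => ((‖q.2 - circlePoint q.1‖) ^ 2)⁻¹) := by
      refine Measurable.stronglyMeasurable (Measurable.inv (Measurable.pow_const ?_ 2))
      exact continuous_norm.measurable.comp
        (measurable_snd.sub (measurable_circlePoint.comp measurable_fst))
    exact hm.integral_prod_right'.measurable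
  have hgm : Measurable fun θ : ℝ => |Real.log (infDist (circlePoint θ) E)| := by
    apply Measurable.abs
    exact Real.measurable_log.comp ((continuous_infDist_pt E).comp continuous_circlePoint).measurable
  have hp0 : ENNReal.ofReal p ≠ 0 := by
    simp only [ne_eq, ENNReal.ofReal_eq_zero, not_le]
    exact hp
  have hg : MemLp (fun θ => |Real.log (infDist (circlePoint θ) E)|) (ENNReal.ofReal p) mT := by
    refine ⟨hgm.aestronglyMeasurable, ?_⟩
    rw [eLpNorm_eq_lintegral_rpow_enorm_toReal hp0 ENNReal.ofReal_ne_top,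
      ENNReal.toReal_ofReal hp.le]
    refine ENNReal.rpow_lt_top_of_nonneg (by positivity) ?_
    have heq : ∀ θ : ℝ, ‖|Real.log (infDist (circlePoint θ) E)|‖ₑ ^ p
        = ENNReal.ofReal (|Real.log (infDist (circlePoint θ) E)| ^ p) := by
      intro θ
      rw [← ENNReal.ofReal_rpow_of_nonneg (abs_nonneg _) hp.le]
      congr 1
      rw [← ofReal_norm_eq_enorm, Real.norm_eq_abs, _root_.abs_abs]
    rw [lintegral_congr heq]
    exact hBC.ne
  set μU := (μ Set.univ).toReal with hμUdef
  set C : ℝ := |Real.log (μU/2)| + |Real.log (2*μU)| with hCdef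
  have hmem : MemLp (fun θ => C + 2 * |Real.log (infDist (circlePoint θ) E)|)
      (ENNReal.ofReal p) mT := (memLp_const C).add (hg.const_mul 2)
  refine MemLp.of_le hmem ((Real.measurable_log.comp hFm).aestronglyMeasurable) ?_
  filter_upwards [hae] with θ hθ
  rcases eq_or_ne μ 0 with rfl | hμ0
  · have : (2:ℝ) * ∫ η, ((‖η - circlePoint θ‖) ^ 2)⁻¹ ∂(0 : Measure ℂ) = 0 := by
      simp
    rw [Real.norm_eq_abs, Real.norm_eq_abs, this, Real.log_zero, abs_zero]
    positivity
  -- main case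
  have hμU : 0 < μU :=
    ENNReal.toReal_pos (fun h => hμ0 (Measure.measure_univ_eq_zero.mp h)) (measure_ne_top μ _)
  have hE : E.Nonempty := by
    rcases E.eq_empty_or_nonempty with rfl | h
    · exact absurd (Measure.measure_univ_eq_zero.mp (by simpa using hsupp)) hμ0
    · exact h
  set ξ := circlePoint θ with hξdef
  set d : ℝ := infDist ξ E with hdd
  have hd : 0 < d := (hclosed.notMem_iff_infDist_pos hE).mp hθ
  have haefact : ∀ᵐ η ∂μ, d ≤ ‖η - ξ‖ ∧ ‖η - ξ‖ ≤ 2 := by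
    filter_upwards [haeE] with η hη
    have hη1 : ‖η‖ = 1 := by
      have := hsphere hη
      rw [mem_sphere_zero_iff_norm] at this
      simpa using this
    constructor
    · have h := infDist_le_dist_of_mem (x := ξ) hη
      rw [Complex.dist_eq] at h
      rw [← norm_sub_rev ξ η]
      exact h
    · calc ‖η - ξ‖ ≤ ‖η‖ + ‖ξ‖ := by
            simpa using norm_sub_le η ξ
      _ ≤ 2 := by rw [hη1, abs_circlePoint θ]; norm_num
  have hint : Integrable (fun η => ((‖η - ξ‖) ^ 2)⁻¹) μ := by
    refine integrable_invsq μ ξ d hd ?_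
    filter_upwards [haefact] with η hη using hη.1
  set J : ℝ := ∫ η, ((‖η - ξ‖) ^ 2)⁻¹ ∂μ with hJdef
  have hJlb : μU * (4:ℝ)⁻¹ ≤ J := by
    have h4 : ∫ η, (4:ℝ)⁻¹ ∂μ ≤ J := by
      refine integral_mono_ae (integrable_const _) hint ?_
      filter_upwards [haefact] with η hη
      have h0 : 0 < ‖η - ξ‖ := lt_of_lt_of_le hd hη.1
      exact inv_anti₀ (pow_pos h0 2) (by nlinarith [hη.2])
    rw [integral_const] at h4
    simpa [measureReal_def, hμUdef] using h4
  have hJub : J ≤ μU * ((d:ℝ)^2)⁻¹ := by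
    have h4 : J ≤ ∫ _η, ((d:ℝ)^2)⁻¹ ∂μ := by
      refine integral_mono_ae hint (integrable_const _) ?_
      filter_upwards [haefact] with η hη
      exact inv_anti₀ (pow_pos hd 2) (by nlinarith [hη.1, hd])
    rw [integral_const] at h4
    simpa [measureReal_def, hμUdef] using h4
  have hJpos : 0 < J := lt_of_lt_of_le (by positivity) hJlb
  have hFpos : 0 < 2 * J := by linarith
  have hlog_lb : Real.log (μU/2) ≤ Real.log (2 * J) := by
    refine Real.log_le_log (by positivity) (by linarith)
  have hlog_ub : Real.log (2 * J) ≤ Real.log (2 * μU) - 2 * Real.log d := by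
    have h1 : Real.log (2 * J) ≤ Real.log (2 * μU * ((d:ℝ)^2)⁻¹) :=
      Real.log_le_log hFpos (by nlinarith)
    have h2 : Real.log (2 * μU * ((d:ℝ)^2)⁻¹) = Real.log (2*μU) + Real.log (((d:ℝ)^2)⁻¹) :=
      Real.log_mul (by positivity) (by positivity)
    have h3 : Real.log (((d:ℝ)^2)⁻¹) = -(2 * Real.log d) := by
      rw [Real.log_inv, Real.log_pow]
      push_cast
      ring
    rw [h2, h3] at h1
    linarith
  rw [Real.norm_eq_abs, Real.norm_eq_abs]
  have hRHS : 0 ≤ C + 2 * |Real.log d| := by positivity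
  rw [_root_.abs_of_nonneg hRHS]
  have hC1 : -Real.log (μU/2) ≤ |Real.log (μU/2)| := neg_le_abs _
  have hC2 : Real.log (2*μU) ≤ |Real.log (2*μU)| := le_abs_self _
  have hC3 : -Real.log d ≤ |Real.log d| := neg_le_abs _
  have hC0 : 0 ≤ |Real.log (μU/2)| := abs_nonneg _
  have hC0' : 0 ≤ |Real.log (2*μU)| := abs_nonneg _
  refine abs_le.mpr ⟨?_, ?_⟩
  · rw [hCdef]
    have : 0 ≤ 2 * |Real.log d| := by positivity
    linarith
  · rw [hCdef]
    linarith
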